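/- If A is a complete perfect distributive quasi relation algebra, then the map ψ(a) = {j ∈ J∞(A) : j ≤ a} is an isomorphism from A onto the complex algebra (A_+)^+ of its dual DqRA-frame A_+; in particular ψ additionally satisfies ψ(¬a) = ¬ψ(a). -/

import Mathlib

/-- An involutive FL-algebra (InFL-algebra) structure on a lattice:
a monoid operation with residuation law (Res) expressed via the two
linear negations `lneg` (∼) and `rneg` (−), which are inverse involutions. -/
structure InFL (A : Type*) [Lattice A] where
  mul : A → A → A
  one : A
  mul_assoc : ∀ a b c : A, mul (mul a b) c = mul a (mul b c)
  one_mul : ∀ a : A, mul one a = a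
  mul_one : ∀ a : A, mul a one = a
  lneg : A → A
  rneg : A → A
  res_left : ∀ a b c : A, mul a b ≤ c ↔ a ≤ rneg (mul b (lneg c))
  res_right : ∀ a b c : A, mul a b ≤ c ↔ b ≤ lneg (mul (rneg c) a)
  rneg_lneg : ∀ a : A, rneg (lneg a) = a
  lneg_rneg : ∀ a : A, lneg (rneg a) = a

/-- The sum operation `a + b := −(∼b · ∼a)` of an InFL-algebra. -/
def InFL.sum {A : Type*} [Lattice A] (S : InFL A) (a b : A) : A :=
  S.rneg (S.mul (S.lneg b) (S.lneg a))

/-- A quasi relation algebra: a De Morgan InFL-algebra satisfying (Dp):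
`¬(a·b) = ¬a + ¬b`. -/
structure QRA (A : Type*) [Lattice A] extends InFL A where
  neg : A → A
  neg_neg : ∀ a : A, neg (neg a) = a
  dm : ∀ a b : A, neg (a ⊓ b) = neg a ⊔ neg b
  dp : ∀ a b : A, neg (mul a b) = rneg (mul (lneg (neg b)) (lneg (neg a)))

/-- Completely join-irreducible element of a complete lattice. -/
def CJI {A : Type*} [CompleteLattice A] (j : A) : Prop :=
  ∀ S : Set A, j = sSup S → j ∈ S

/-- Completely meet-irreducible element of a complete lattice. -/
def CMI {A : Type*} [CompleteLattice A] (m : A) : Prop :=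
  ∀ S : Set A, m = sInf S → m ∈ S

/-- A complete lattice is perfect if the completely join-irreducibles are join-dense
and the completely meet-irreducibles are meet-dense. -/
def PerfectLattice (A : Type*) [CompleteLattice A] : Prop :=
  ∀ a : A, a = sSup {j | CJI j ∧ j ≤ a} ∧ a = sInf {m | CMI m ∧ a ≤ m}

/-- The map `κ(j) = ⋁ {a : j ≰ a}`. -/
def kappa {A : Type*} [CompleteLattice A] (j : A) : A :=
  sSup {a | ¬ j ≤ a}

/-- Extension of a binary set-operation `c : W → W → Set W` to subsets:
`U ∘ V = ⋃ { x ∘ y : x ∈ U, y ∈ V }`. -/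
def setComp {W : Type*} (c : W → W → Set W) (U V : Set W) : Set W :=
  {z | ∃ x ∈ U, ∃ y ∈ V, z ∈ c x y}

/-- A DInFL-frame `(W, I, ≼, ∘, ∼, −)`. -/
structure DInFLFrame (W : Type*) where
  I : Set W
  le : W → W → Prop
  le_refl : ∀ x, le x x
  le_trans : ∀ x y z, le x y → le y z → le x z
  le_antisymm : ∀ x y, le x y → le y x → x = y
  comp : W → W → Set W
  tld : W → W
  mns : W → W
  ax1 : ∀ x y, (le x y ↔ y ∈ setComp comp I {x}) ∧ (le x y ↔ y ∈ setComp comp {x} I)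
  ax2 : ∀ x y, le x y → x ∈ I → y ∈ I
  ax3 : ∀ u v x y, le x y → x ∈ comp u v → y ∈ comp u v
  ax4 : ∀ x y z, setComp comp (comp x y) {z} = setComp comp {x} (comp y z)
  ax5 : ∀ x y z, tld z ∈ comp x y ↔ mns y ∈ comp z x
  ax6 : ∀ x, le (mns (tld x)) x ∧ le (tld (mns x)) x

/-- Upsets of the underlying poset of a DInFL-frame. -/
def DInFLFrame.IsUpset {W : Type*} (F : DInFLFrame W) (U : Set W) : Prop :=
  ∀ x y, F.le x y → x ∈ U → y ∈ U

/-- The operation `∼U = {w : w⁻ ∉ U}` of the complex algebra. -/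
def DInFLFrame.sneg {W : Type*} (F : DInFLFrame W) (U : Set W) : Set W :=
  {w | F.mns w ∉ U}

/-- The operation `−U = {w : w^∼ ∉ U}` of the complex algebra. -/
def DInFLFrame.mneg {W : Type*} (F : DInFLFrame W) (U : Set W) : Set W :=
  {w | F.tld w ∉ U}

/-- The map `ψ(a) = {j ∈ J∞(A) : j ≤ a}`. -/
def psiMap {A : Type*} [CompleteLattice A] (a : A) : Set {a : A // CJI a} :=
  {j | j.1 ≤ a}

/-- Upsets of `(J∞(A), ≼)` where `j ≼ k ⟺ k ≤ j`. -/
def IsJUpset {A : Type*} [CompleteLattice A] (U : Set {a : A // CJI a}) : Prop :=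
  ∀ j k : {a : A // CJI a}, k.1 ≤ j.1 → j ∈ U → k ∈ U

/-!
Since `·` is residuated in each argument it preserves arbitrary joins, and `∼`, `−`, `¬` are
order-reversing bijections with `∼a ≤ b ↔ −b ≤ a` and `¬a ≤ b ↔ ¬b ≤ a`. Everything then reduces
to the fact that in a perfect distributive lattice every completely join-irreducible `j` is
completely join-prime, which amounts to `j ≰ κ(j)`. By meet-density there is a completely
meet-irreducible `m` above everything strictly below `j` but not above `j`. If `j ≰ a` and
`a ≰ m`, the unique cover `m⁺` of `m` lies below `m ⊔ a` and `m ⊔ j`, so distributivity gives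
`m⁺ ≤ m ⊔ (j ⊓ m) ⊔ (j ⊓ a) = m`, which is absurd; hence `κ(j) ≤ m`.
-/

section InvolutiveFL

variable {A : Type*} [Lattice A]

lemma le_iff_le_of_antitone_inverses {f g : A → A} (hf : Antitone f) (hg : Antitone g)
    (hfg : Function.LeftInverse f g) (hgf : Function.LeftInverse g f) {a b : A} :
    f a ≤ b ↔ g b ≤ a :=
  ⟨fun h => (hg h).trans_eq (hgf a), fun h => (hf h).trans_eq (hfg b)⟩

namespace InFL

variable (S : InFL A)

lemma gc_mul_left (b : A) :
    GaloisConnection (S.mul · b) (fun c => S.rneg (S.mul b (S.lneg c))) :=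
  fun a c => S.res_left a b c

lemma gc_mul_right (a : A) :
    GaloisConnection (S.mul a ·) (fun c => S.lneg (S.mul (S.rneg c) a)) :=
  fun b c => S.res_right a b c

lemma mul_le_mul {a b c d : A} (hab : a ≤ b) (hcd : c ≤ d) : S.mul a c ≤ S.mul b d :=
  ((S.gc_mul_left c).monotone_l hab).trans ((S.gc_mul_right b).monotone_l hcd)

lemma lneg_le_lneg_iff_mul_le (a b : A) :
    S.lneg b ≤ S.lneg a ↔ S.mul a (S.lneg b) ≤ S.lneg S.one := by
  simpa only [S.rneg_lneg, S.one_mul] using (S.res_right a (S.lneg b) (S.lneg S.one)).symm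

lemma rneg_le_rneg_iff_mul_le (a b : A) :
    S.rneg a ≤ S.rneg b ↔ S.mul (S.rneg a) b ≤ S.rneg S.one := by
  simpa only [S.lneg_rneg, S.mul_one] using (S.res_left (S.rneg a) b (S.rneg S.one)).symm

lemma lneg_antitone : Antitone S.lneg := fun a b hab =>
  (S.lneg_le_lneg_iff_mul_le a b).2 <|
    (S.mul_le_mul hab le_rfl).trans ((S.lneg_le_lneg_iff_mul_le b b).1 le_rfl)

lemma rneg_antitone : Antitone S.rneg := fun a b hab =>
  (S.rneg_le_rneg_iff_mul_le b a).2 <|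
    (S.mul_le_mul le_rfl hab).trans ((S.rneg_le_rneg_iff_mul_le b b).1 le_rfl)

lemma lneg_le_iff {a b : A} : S.lneg a ≤ b ↔ S.rneg b ≤ a :=
  le_iff_le_of_antitone_inverses S.lneg_antitone S.rneg_antitone S.lneg_rneg S.rneg_lneg

lemma rneg_le_iff {a b : A} : S.rneg a ≤ b ↔ S.lneg b ≤ a :=
  le_iff_le_of_antitone_inverses S.rneg_antitone S.lneg_antitone S.rneg_lneg S.lneg_rneg

end InFL

namespace QRA

variable (Q : QRA A)

lemma neg_antitone : Antitone Q.neg := fun a b hab =>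
  calc Q.neg b ≤ Q.neg a ⊔ Q.neg b := le_sup_right
    _ = Q.neg a := by rw [← Q.dm, inf_eq_left.2 hab]

lemma neg_le_iff {a b : A} : Q.neg a ≤ b ↔ Q.neg b ≤ a :=
  le_iff_le_of_antitone_inverses Q.neg_antitone Q.neg_antitone Q.neg_neg Q.neg_neg

end QRA

end InvolutiveFL

section PerfectLattice

variable {A : Type*} [CompleteLattice A]

lemma CJI.sSup_Iio_lt {j : A} (hj : CJI j) : sSup (Set.Iio j) < j :=
  lt_of_le_of_ne (sSup_le fun _ hx => hx.le) fun h => lt_irrefl j (hj (Set.Iio j) h.symm)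

lemma CMI.lt_sInf_Ioi {m : A} (hm : CMI m) : m < sInf (Set.Ioi m) :=
  lt_of_le_of_ne (le_sInf fun _ hx => hx.le) fun h => lt_irrefl m (hm (Set.Ioi m) h)

lemma PerfectLattice.exists_cmi_of_cji (hperf : PerfectLattice A) {j : A} (hj : CJI j) :
    ∃ m, CMI m ∧ sSup (Set.Iio j) ≤ m ∧ ¬ j ≤ m := by
  by_contra! h
  have hj_le : j ≤ sSup (Set.Iio j) :=
    (le_sInf fun m hm => h m hm.1 hm.2).trans_eq (hperf _).2.symm
  exact hj.sSup_Iio_lt.not_ge hj_le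

lemma kappa_le_of_cmi (hdist : ∀ a b c : A, a ⊓ (b ⊔ c) = (a ⊓ b) ⊔ (a ⊓ c))
    {j m : A} (hm : CMI m) (hbelow : ∀ x < j, x ≤ m) (hjm : ¬ j ≤ m) : kappa j ≤ m := by
  refine sSup_le fun a (hja : ¬ j ≤ a) => ?_
  by_contra ham
  set cover := sInf (Set.Ioi m)
  have hcover_a : cover ≤ m ⊔ a := sInf_le (left_lt_sup.2 ham)
  have hcover_j : cover ≤ m ⊔ j := sInf_le (left_lt_sup.2 hjm)
  have hcover_inf_j : cover ⊓ j ≤ m :=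
    calc cover ⊓ j ≤ j ⊓ (m ⊔ a) := le_inf inf_le_right (inf_le_left.trans hcover_a)
      _ = j ⊓ m ⊔ j ⊓ a := hdist j m a
      _ ≤ m := sup_le (hbelow _ (inf_lt_left.2 hjm)) (hbelow _ (inf_lt_left.2 hja))
  have hcover_le : cover ≤ m :=
    calc cover = cover ⊓ (m ⊔ j) := (inf_eq_left.2 hcover_j).symm
      _ = cover ⊓ m ⊔ cover ⊓ j := hdist cover m j
      _ ≤ m := sup_le inf_le_right hcover_inf_j
  exact hm.lt_sInf_Ioi.not_ge hcover_le

lemma CJI.not_le_kappa (hperf : PerfectLattice A)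
    (hdist : ∀ a b c : A, a ⊓ (b ⊔ c) = (a ⊓ b) ⊔ (a ⊓ c)) {j : A} (hj : CJI j) :
    ¬ j ≤ kappa j := by
  obtain ⟨m, hm, hbelow, hjm⟩ := hperf.exists_cmi_of_cji hj
  have hkappa : kappa j ≤ m :=
    kappa_le_of_cmi hdist hm (fun x hx => (le_sSup (Set.mem_Iio.2 hx)).trans hbelow) hjm
  exact fun h => hjm (h.trans hkappa)

lemma CJI.le_iff_not_le_kappa (hperf : PerfectLattice A)
    (hdist : ∀ a b c : A, a ⊓ (b ⊔ c) = (a ⊓ b) ⊔ (a ⊓ c)) {j : A} (hj : CJI j) (a : A) :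
    j ≤ a ↔ ¬ a ≤ kappa j :=
  ⟨fun h hk => hj.not_le_kappa hperf hdist (h.trans hk),
    fun h => by_contra fun hja => h (le_sSup hja)⟩

lemma CJI.le_sSup_iff (hperf : PerfectLattice A)
    (hdist : ∀ a b c : A, a ⊓ (b ⊔ c) = (a ⊓ b) ⊔ (a ⊓ c)) {j : A} (hj : CJI j) (T : Set A) :
    j ≤ sSup T ↔ ∃ t ∈ T, j ≤ t := by
  simp only [hj.le_iff_not_le_kappa hperf hdist, sSup_le_iff, not_forall, exists_prop]

lemma CJI.le_sup_iff (hperf : PerfectLattice A)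
    (hdist : ∀ a b c : A, a ⊓ (b ⊔ c) = (a ⊓ b) ⊔ (a ⊓ c)) {j : A} (hj : CJI j) (a b : A) :
    j ≤ a ⊔ b ↔ j ≤ a ∨ j ≤ b := by
  simp only [hj.le_iff_not_le_kappa hperf hdist, sup_le_iff, not_and_or]

lemma CJI.exists_cji_le_of_le_gc (hperf : PerfectLattice A)
    (hdist : ∀ a b c : A, a ⊓ (b ⊔ c) = (a ⊓ b) ⊔ (a ⊓ c)) {l u : A → A}
    (gc : GaloisConnection l u) {c a : A} (hc : CJI c) (hca : c ≤ l a) :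
    ∃ j, CJI j ∧ j ≤ a ∧ c ≤ l j := by
  have hc_sup : c ≤ sSup (l '' {j | CJI j ∧ j ≤ a}) := by
    rwa [sSup_image, ← gc.l_sSup, ← (hperf a).1]
  obtain ⟨j, ⟨hj, hja⟩, hcj⟩ := Set.exists_mem_image.1 ((hc.le_sSup_iff hperf hdist _).1 hc_sup)
  exact ⟨j, hj, hja, hcj⟩

end PerfectLattice

section ComplexAlgebra

variable {A : Type*} [CompleteLattice A]

lemma isJUpset_psiMap (a : A) : IsJUpset (psiMap a) :=
  fun _ _ hkj hja => le_trans hkj hja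

lemma psiMap_inf (a b : A) : psiMap (a ⊓ b) = psiMap a ∩ psiMap b :=
  Set.ext fun _ => le_inf_iff

lemma psiMap_subset_psiMap_iff (hperf : PerfectLattice A) {a b : A} :
    psiMap a ⊆ psiMap b ↔ a ≤ b :=
  ⟨fun h => (hperf a).1.trans_le <| sSup_le fun j hj => h (show ⟨j, hj.1⟩ ∈ psiMap a from hj.2),
    fun h _ hj => le_trans hj h⟩

lemma psiMap_injective (hperf : PerfectLattice A) : Function.Injective (psiMap (A := A)) :=
  fun _ _ h => le_antisymm ((psiMap_subset_psiMap_iff hperf).1 h.subset)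
    ((psiMap_subset_psiMap_iff hperf).1 h.superset)

lemma psiMap_sup (hperf : PerfectLattice A)
    (hdist : ∀ a b c : A, a ⊓ (b ⊔ c) = (a ⊓ b) ⊔ (a ⊓ c)) (a b : A) :
    psiMap (a ⊔ b) = psiMap a ∪ psiMap b :=
  Set.ext fun j => j.2.le_sup_iff hperf hdist a b

lemma psiMap_sSup_val_image (hperf : PerfectLattice A)
    (hdist : ∀ a b c : A, a ⊓ (b ⊔ c) = (a ⊓ b) ⊔ (a ⊓ c)) {U : Set {a : A // CJI a}}
    (hU : IsJUpset U) : psiMap (sSup (Subtype.val '' U)) = U := by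
  ext k
  refine ⟨fun hk => ?_, fun hk => le_sSup ⟨k, hk, rfl⟩⟩
  obtain ⟨_, ⟨j, hj, rfl⟩, hkj⟩ := (k.2.le_sSup_iff hperf hdist _).1 hk
  exact hU j k hkj hj

lemma psiMap_mul (hperf : PerfectLattice A)
    (hdist : ∀ a b c : A, a ⊓ (b ⊔ c) = (a ⊓ b) ⊔ (a ⊓ c)) (S : InFL A) (a b : A) :
    psiMap (S.mul a b) =
      setComp (fun j k => {c : {a : A // CJI a} | c.1 ≤ S.mul j.1 k.1}) (psiMap a) (psiMap b) := by
  ext c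
  refine ⟨fun hc => ?_, fun ⟨j, hja, k, hkb, hc⟩ => hc.trans (S.mul_le_mul hja hkb)⟩
  obtain ⟨j, hj, hja, hcj⟩ := c.2.exists_cji_le_of_le_gc hperf hdist (S.gc_mul_left b) hc
  obtain ⟨k, hk, hkb, hcjk⟩ := c.2.exists_cji_le_of_le_gc hperf hdist (S.gc_mul_right j) hcj
  exact ⟨⟨j, hj⟩, hja, ⟨k, hk⟩, hkb, hcjk⟩

lemma psiMap_eq_of_le_iff (hperf : PerfectLattice A)
    (hdist : ∀ a b c : A, a ⊓ (b ⊔ c) = (a ⊓ b) ⊔ (a ⊓ c)) {f g : A → A}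
    (hfg : ∀ {a b}, f a ≤ b ↔ g b ≤ a) (a : A) :
    psiMap (f a) = {j : {a : A // CJI a} | ¬ g (kappa j.1) ≤ a} :=
  Set.ext fun j => (j.2.le_iff_not_le_kappa hperf hdist _).trans (not_congr hfg)

end ComplexAlgebra

/-- A complete perfect distributive quasi relation algebra is isomorphic, via
`ψ(a) = {j ∈ J∞(A) : j ≤ a}`, to the complex algebra `(A₊)⁺` of its dual
DqRA-frame; in particular `ψ` additionally satisfies `ψ(¬a) = ¬ψ(a)`. -/
theorem perfect_DqRA_iso_complex_algebra {A : Type*} [CompleteLattice A]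
    (Q : QRA A) (hperf : PerfectLattice A)
    (hdist : ∀ a b c : A, a ⊓ (b ⊔ c) = (a ⊓ b) ⊔ (a ⊓ c)) :
    (∀ a : A, IsJUpset (psiMap a)) ∧
    Function.Injective (psiMap (A := A)) ∧
    (∀ U, IsJUpset U → ∃ a : A, psiMap a = U) ∧
    (∀ a b : A, a ≤ b ↔ psiMap a ⊆ psiMap b) ∧
    (∀ a b : A, psiMap (a ⊓ b) = psiMap a ∩ psiMap b) ∧
    (∀ a b : A, psiMap (a ⊔ b) = psiMap a ∪ psiMap b) ∧
    psiMap Q.one = {i : {a : A // CJI a} | i.1 ≤ Q.one} ∧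
    (∀ a b : A, psiMap (Q.mul a b) =
      setComp (fun j k => {c : {a : A // CJI a} | c.1 ≤ Q.mul j.1 k.1})
        (psiMap a) (psiMap b)) ∧
    (∀ a : A, psiMap (Q.lneg a) = {j : {a : A // CJI a} | ¬ Q.rneg (kappa j.1) ≤ a}) ∧
    (∀ a : A, psiMap (Q.rneg a) = {j : {a : A // CJI a} | ¬ Q.lneg (kappa j.1) ≤ a}) ∧
    (∀ a : A, psiMap (Q.neg a) = {j : {a : A // CJI a} | ¬ Q.neg (kappa j.1) ≤ a}) :=
  ⟨isJUpset_psiMap, psiMap_injective hperf,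
    fun _ hU => ⟨_, psiMap_sSup_val_image hperf hdist hU⟩,
    fun _ _ => (psiMap_subset_psiMap_iff hperf).symm, psiMap_inf, psiMap_sup hperf hdist, rfl,
    psiMap_mul hperf hdist Q.toInFL,
    psiMap_eq_of_le_iff hperf hdist Q.lneg_le_iff,
    psiMap_eq_of_le_iff hperf hdist Q.rneg_le_iff,
    psiMap_eq_of_le_iff hperf hdist Q.neg_le_iff⟩
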